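/- arXiv:2404.18811 — 2 statements merged into one kernel-verified Lean document; each statement's English description precedes it below -/
import Mathlib

section
/- Let f₀ : ℝ × ℝ³ → ℝ, A = (A_α) : ℝ × ℝ³ → ℝ³ and f₁ : ℝ × ℝ³ → ℝ be smooth. Then the following are equivalent: (i) for all (t,x,v) ∈ ℝ × ℝ³ × ℝ³ and all β, ∂f₀/∂x^β(t,x) = 0 and ∂f₁/∂x^β(t,x) − ∂A_β/∂t(t,x) + v^α( ∂A_α/∂x^β − ∂A_β/∂x^α )(t,x) = 0; (ii) f₀ depends only on t, and there exists a smooth potential Ψ : ℝ × ℝ³ → ℝ such that A_α = ∂Ψ/∂x^α and f₁ = ∂Ψ/∂t. -/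
open Finset

open Set MeasureTheory Filter
open scoped Topology NNReal ENNReal

variable {E F : Type*} [NormedAddCommGroup E] [NormedSpace ℝ E]
  [NormedAddCommGroup F] [NormedSpace ℝ F] [CompleteSpace F]

section Helpers

variable {F : Type*} [NormedAddCommGroup F] [NormedSpace ℝ F]
variable {V : Type*} [NormedAddCommGroup V] [NormedSpace ℝ V]

/-- Partial derivative in the second (vector) variable as composition with `inr`. -/
lemma sliceX_hasFDerivAt (h : ℝ × V → F) (hdiff : Differentiable ℝ h) (t : ℝ) (x : V) :
    HasFDerivAt (fun y => h (t, y))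
      ((fderiv ℝ h (t, x)).comp (ContinuousLinearMap.inr ℝ ℝ V)) x :=
  (hdiff (t, x)).hasFDerivAt.comp x (hasFDerivAt_prodMk_right t x)

/-- Partial derivative in the first (time) variable. -/
lemma sliceT_hasDerivAt (h : ℝ × V → F) (hdiff : Differentiable ℝ h) (t : ℝ) (x : V) :
    HasDerivAt (fun s => h (s, x)) (fderiv ℝ h (t, x) (1, 0)) t :=
  (hdiff (t, x)).hasFDerivAt.comp_hasDerivAt t ((hasDerivAt_id t).prodMk (hasDerivAt_const t x))

end Helpers

section Decomp

variable {M : Type*} [NormedAddCommGroup M] [NormedSpace ℝ M]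

lemma prod_decomp (w : ℝ × (Fin 3 → ℝ)) :
    w = w.1 • ((1:ℝ), (0 : Fin 3 → ℝ))
      + ∑ γ : Fin 3, w.2 γ • ((0:ℝ), (Pi.single γ (1:ℝ) : Fin 3 → ℝ)) := by
  have h2 : w.2 = ∑ γ : Fin 3, w.2 γ • (Pi.single γ (1:ℝ) : Fin 3 → ℝ) := by
    funext j
    simp [Pi.single_apply]
  ext j
  · simp [Prod.fst_sum]
  · conv_lhs => rw [h2]
    simp [Prod.snd_sum]

lemma clm_decomp (T : (ℝ × (Fin 3 → ℝ)) →L[ℝ] M) (w : ℝ × (Fin 3 → ℝ)) :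
    T w = w.1 • T ((1:ℝ), (0 : Fin 3 → ℝ))
      + ∑ γ : Fin 3, w.2 γ • T ((0:ℝ), Pi.single γ (1:ℝ)) := by
  conv_lhs => rw [prod_decomp w]
  rw [map_add, T.map_smul, map_sum]
  congr 1
  exact Finset.sum_congr rfl fun γ _ => by rw [T.map_smul]

lemma clm_decompV (T : (Fin 3 → ℝ) →L[ℝ] M) (w : Fin 3 → ℝ) :
    T w = ∑ γ : Fin 3, w γ • T (Pi.single γ (1:ℝ)) := by
  have hw : w = ∑ γ : Fin 3, w γ • (Pi.single γ (1:ℝ) : Fin 3 → ℝ) := by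
    funext j
    simp [Pi.single_apply]
  conv_lhs => rw [hw]
  rw [map_sum]
  exact Finset.sum_congr rfl fun γ _ => by rw [T.map_smul]

end Decomp


section OneForm

variable (f₁ : ℝ → (Fin 3 → ℝ) → ℝ) (A : ℝ → (Fin 3 → ℝ) → Fin 3 → ℝ)

/-- The 1-form `f₁ dt + A·dx` on `ℝ × ℝ³` as a continuous-linear-map-valued function. -/
noncomputable def Lform : (ℝ × (Fin 3 → ℝ)) → ((ℝ × (Fin 3 → ℝ)) →L[ℝ] ℝ) := fun p =>
  f₁ p.1 p.2 • ContinuousLinearMap.fst ℝ ℝ (Fin 3 → ℝ)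
    + ∑ α : Fin 3, A p.1 p.2 α •
        ((ContinuousLinearMap.proj α).comp (ContinuousLinearMap.snd ℝ ℝ (Fin 3 → ℝ)))

lemma Lform_apply (p : ℝ × (Fin 3 → ℝ)) (w : ℝ × (Fin 3 → ℝ)) :
    Lform f₁ A p w = f₁ p.1 p.2 * w.1 + ∑ α : Fin 3, A p.1 p.2 α * w.2 α := by
  simp [Lform]

variable {f₁ A}
variable (hf₁ : ContDiff ℝ (⊤ : ℕ∞) (fun p : ℝ × (Fin 3 → ℝ) => f₁ p.1 p.2))
  (hA : ContDiff ℝ (⊤ : ℕ∞) (fun p : ℝ × (Fin 3 → ℝ) => A p.1 p.2))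

include hf₁ hA in
lemma Lform_contDiff : ContDiff ℝ (⊤ : ℕ∞) (Lform f₁ A) := by
  apply ContDiff.add
  · exact hf₁.smul contDiff_const
  · exact ContDiff.sum fun α _ => ((contDiff_pi.mp hA α).smul contDiff_const)

include hf₁ hA in
lemma Lform_hasFDerivAt (p : ℝ × (Fin 3 → ℝ)) :
    HasFDerivAt (Lform f₁ A)
      ((fderiv ℝ (fun q : ℝ × (Fin 3 → ℝ) => f₁ q.1 q.2) p).smulRight
          (ContinuousLinearMap.fst ℝ ℝ (Fin 3 → ℝ))
        + ∑ α : Fin 3, (fderiv ℝ (fun q : ℝ × (Fin 3 → ℝ) => A q.1 q.2 α) p).smulRight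
            ((ContinuousLinearMap.proj α).comp (ContinuousLinearMap.snd ℝ ℝ (Fin 3 → ℝ)))) p := by
  apply HasFDerivAt.add
  · exact ((hf₁.differentiable (by simp) p).hasFDerivAt).smul_const (ContinuousLinearMap.fst ℝ ℝ (Fin 3 → ℝ))
  · exact HasFDerivAt.fun_sum fun α _ =>
      (((contDiff_pi.mp hA α).differentiable (by simp) p).hasFDerivAt).smul_const ((ContinuousLinearMap.proj α).comp (ContinuousLinearMap.snd ℝ ℝ (Fin 3 → ℝ)))

include hf₁ hA in
lemma Lform_fderiv_apply (p w v : ℝ × (Fin 3 → ℝ)) :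
    fderiv ℝ (Lform f₁ A) p w v
      = fderiv ℝ (fun q : ℝ × (Fin 3 → ℝ) => f₁ q.1 q.2) p w * v.1
        + ∑ α : Fin 3, fderiv ℝ (fun q : ℝ × (Fin 3 → ℝ) => A q.1 q.2 α) p w * v.2 α := by
  rw [(Lform_hasFDerivAt hf₁ hA p).fderiv]
  simp

end OneForm

section Symm

lemma algebra_symm (a : ℝ) (b c : Fin 3 → ℝ) (d : Fin 3 → Fin 3 → ℝ)
    (hbc : ∀ γ, b γ = c γ) (hd : ∀ α γ, d α γ = d γ α) (w1 v1 : ℝ) (w2 v2 : Fin 3 → ℝ) :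
    (w1 * a + ∑ γ : Fin 3, w2 γ * b γ) * v1
        + ∑ α : Fin 3, (w1 * c α + ∑ γ : Fin 3, w2 γ * d α γ) * v2 α
      = (v1 * a + ∑ γ : Fin 3, v2 γ * b γ) * w1
        + ∑ α : Fin 3, (v1 * c α + ∑ γ : Fin 3, v2 γ * d α γ) * w2 α := by
  simp only [Fin.sum_univ_three]
  rw [hbc 0, hbc 1, hbc 2, hd 1 0, hd 2 0, hd 2 1]
  ring

variable {f₁ : ℝ → (Fin 3 → ℝ) → ℝ} {A : ℝ → (Fin 3 → ℝ) → Fin 3 → ℝ}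
variable (hf₁ : ContDiff ℝ (⊤ : ℕ∞) (fun p : ℝ × (Fin 3 → ℝ) => f₁ p.1 p.2))
  (hA : ContDiff ℝ (⊤ : ℕ∞) (fun p : ℝ × (Fin 3 → ℝ) => A p.1 p.2))

include hf₁ hA in
lemma Lform_fderiv_symm
    (hS1 : ∀ (p : ℝ × (Fin 3 → ℝ)) (β : Fin 3),
      fderiv ℝ (fun q : ℝ × (Fin 3 → ℝ) => f₁ q.1 q.2) p (0, Pi.single β 1)
        = fderiv ℝ (fun q : ℝ × (Fin 3 → ℝ) => A q.1 q.2 β) p (1, 0))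
    (hS2 : ∀ (p : ℝ × (Fin 3 → ℝ)) (α β : Fin 3),
      fderiv ℝ (fun q : ℝ × (Fin 3 → ℝ) => A q.1 q.2 α) p (0, Pi.single β 1)
        = fderiv ℝ (fun q : ℝ × (Fin 3 → ℝ) => A q.1 q.2 β) p (0, Pi.single α 1))
    (p w v : ℝ × (Fin 3 → ℝ)) :
    fderiv ℝ (Lform f₁ A) p w v = fderiv ℝ (Lform f₁ A) p v w := by
  have dF := fun (u : ℝ × (Fin 3 → ℝ)) =>
    clm_decomp (fderiv ℝ (fun q : ℝ × (Fin 3 → ℝ) => f₁ q.1 q.2) p) u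
  have hA_rw : ∀ u u' : ℝ × (Fin 3 → ℝ),
      (∑ α : Fin 3, fderiv ℝ (fun q : ℝ × (Fin 3 → ℝ) => A q.1 q.2 α) p u * u'.2 α)
      = ∑ α : Fin 3, (u.1 * fderiv ℝ (fun q : ℝ × (Fin 3 → ℝ) => A q.1 q.2 α) p (1,0)
          + ∑ γ : Fin 3, u.2 γ *
              fderiv ℝ (fun q : ℝ × (Fin 3 → ℝ) => A q.1 q.2 α) p (0, Pi.single γ 1)) * u'.2 α := by
    intro u u'
    refine Finset.sum_congr rfl fun α _ => ?_
    rw [clm_decomp (fderiv ℝ (fun q : ℝ × (Fin 3 → ℝ) => A q.1 q.2 α) p) u]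
    simp [smul_eq_mul]
  rw [Lform_fderiv_apply hf₁ hA p w v, Lform_fderiv_apply hf₁ hA p v w,
    dF w, dF v, hA_rw w v, hA_rw v w]
  simp only [smul_eq_mul]
  exact algebra_symm _ _ _ _ (fun γ => hS1 p γ) (fun α γ => hS2 p α γ) _ _ _ _

end Symm

section Potential

variable {f₁ : ℝ → (Fin 3 → ℝ) → ℝ} {A : ℝ → (Fin 3 → ℝ) → Fin 3 → ℝ}
variable (hf₁ : ContDiff ℝ (⊤ : ℕ∞) (fun p : ℝ × (Fin 3 → ℝ) => f₁ p.1 p.2))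
  (hA : ContDiff ℝ (⊤ : ℕ∞) (fun p : ℝ × (Fin 3 → ℝ) => A p.1 p.2))

/-- derivative data for the scaled one-form -/
noncomputable def Mder (f₁ : ℝ → (Fin 3 → ℝ) → ℝ) (A : ℝ → (Fin 3 → ℝ) → Fin 3 → ℝ)
    (p : ℝ × (Fin 3 → ℝ)) (u : ℝ) : (ℝ × (Fin 3 → ℝ)) →L[ℝ] ℝ :=
  u • (fderiv ℝ (Lform f₁ A) (u • p) p) + Lform f₁ A (u • p)

include hf₁ hA in
lemma claimA (p : ℝ × (Fin 3 → ℝ)) (u : ℝ) :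
    HasDerivAt (fun u : ℝ => u • Lform f₁ A (u • p)) (Mder f₁ A p u) u := by
  have h1 : HasDerivAt (fun u : ℝ => u • p) p u := by
    simpa using (hasDerivAt_id u).smul_const p
  have h2 : HasDerivAt (fun u : ℝ => Lform f₁ A (u • p))
      (fderiv ℝ (Lform f₁ A) (u • p) p) u := by
    have h2' := ((Lform_contDiff hf₁ hA).differentiable (by simp) (u • p)).hasFDerivAt.comp_hasDerivAt u h1
    exact h2'
  have h3 := (hasDerivAt_id u).fun_smul h2
  simpa [Mder] using h3

include hf₁ hA in
lemma claimB
    (hsymm : ∀ (p w v : ℝ × (Fin 3 → ℝ)),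
      fderiv ℝ (Lform f₁ A) p w v = fderiv ℝ (Lform f₁ A) p v w)
    (p : ℝ × (Fin 3 → ℝ)) (u : ℝ) :
    HasFDerivAt (fun q : ℝ × (Fin 3 → ℝ) => Lform f₁ A (u • q) q) (Mder f₁ A p u) p := by
  have hsm : HasFDerivAt (fun q : ℝ × (Fin 3 → ℝ) => u • q)
      (u • ContinuousLinearMap.id ℝ (ℝ × (Fin 3 → ℝ))) p :=
    (hasFDerivAt_id p).const_smul u
  have hc : HasFDerivAt (fun q : ℝ × (Fin 3 → ℝ) => Lform f₁ A (u • q))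
      ((fderiv ℝ (Lform f₁ A) (u • p)).comp (u • ContinuousLinearMap.id ℝ (ℝ × (Fin 3 → ℝ)))) p :=
    (((Lform_contDiff hf₁ hA).differentiable (by simp) (u • p)).hasFDerivAt).comp p hsm
  have h4 := hc.clm_apply (hasFDerivAt_id p)
  have h5 : ((Lform f₁ A (u • p)).comp (ContinuousLinearMap.id ℝ (ℝ × (Fin 3 → ℝ)))
      + ((fderiv ℝ (Lform f₁ A) (u • p)).comp
          (u • ContinuousLinearMap.id ℝ (ℝ × (Fin 3 → ℝ)))).flip (id p)) = Mder f₁ A p u := by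
    apply ContinuousLinearMap.ext
    intro w
    simp only [ContinuousLinearMap.add_apply, ContinuousLinearMap.comp_apply,
      ContinuousLinearMap.coe_id', id_eq, ContinuousLinearMap.flip_apply,
      ContinuousLinearMap.smul_apply, Mder, ContinuousLinearMap.map_smul, smul_eq_mul]
    rw [hsymm (u • p) w p]
    ring
  rw [h5] at h4
  exact h4.congr_fderiv rfl

include hf₁ hA in
lemma Mder_continuous : Continuous fun z : (ℝ × (Fin 3 → ℝ)) × ℝ => Mder f₁ A z.1 z.2 := by
  have hL : Continuous (Lform f₁ A) := (Lform_contDiff hf₁ hA).continuous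
  have hL' : Continuous (fderiv ℝ (Lform f₁ A)) :=
    ((Lform_contDiff hf₁ hA).fderiv_right (m := (⊤ : ℕ∞)) (by simp)).continuous
  have hsp : Continuous fun z : (ℝ × (Fin 3 → ℝ)) × ℝ => z.2 • z.1 :=
    continuous_snd.smul continuous_fst
  apply Continuous.add
  · exact continuous_snd.smul ((hL'.comp hsp).clm_apply continuous_fst)
  · exact hL.comp hsp

include hf₁ hA in
lemma claimC (p : ℝ × (Fin 3 → ℝ)) :
    (∫ u in (0:ℝ)..1, Mder f₁ A p u) = Lform f₁ A p := by
  have h := intervalIntegral.integral_eq_sub_of_hasDerivAt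
    (f := fun u : ℝ => u • Lform f₁ A (u • p)) (fun u _ => claimA hf₁ hA p u)
    (Continuous.intervalIntegrable
      ((Mder_continuous hf₁ hA).comp (Continuous.prodMk continuous_const continuous_id)) 0 1)
  simpa using h

include hf₁ hA in
lemma claimD
    (hsymm : ∀ (p w v : ℝ × (Fin 3 → ℝ)),
      fderiv ℝ (Lform f₁ A) p w v = fderiv ℝ (Lform f₁ A) p v w)
    (p : ℝ × (Fin 3 → ℝ)) :
    HasFDerivAt (fun q : ℝ × (Fin 3 → ℝ) => ∫ u in (0:ℝ)..1, Lform f₁ A (u • q) q)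
      (Lform f₁ A p) p := by
  -- bound on a compact neighbourhood
  obtain ⟨C, hC⟩ := (isCompact_closedBall p 1).prod (isCompact_Icc (a := (0:ℝ)) (b := 1))
    |>.exists_bound_of_continuousOn (Mder_continuous hf₁ hA).continuousOn
  have hG : Continuous fun z : (ℝ × (Fin 3 → ℝ)) × ℝ => Lform f₁ A (z.2 • z.1) z.1 := by
    have hL : Continuous (Lform f₁ A) := (Lform_contDiff hf₁ hA).continuous
    exact (hL.comp (continuous_snd.smul continuous_fst)).clm_apply continuous_fst
  have key := intervalIntegral.hasFDerivAt_integral_of_dominated_of_fderiv_le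
    (F := fun (q : ℝ × (Fin 3 → ℝ)) (u : ℝ) => Lform f₁ A (u • q) q)
    (F' := fun q u => Mder f₁ A q u) (x₀ := p) (a := (0:ℝ)) (b := 1)
    (bound := fun _ => C) (μ := volume) (Metric.ball_mem_nhds p one_pos)
    (Filter.Eventually.of_forall fun q =>
      ((hG.comp (Continuous.prodMk continuous_const continuous_id)).aestronglyMeasurable))
    (Continuous.intervalIntegrable
      (hG.comp (Continuous.prodMk continuous_const continuous_id)) 0 1)
    (((Mder_continuous hf₁ hA).comp
      (Continuous.prodMk continuous_const continuous_id)).aestronglyMeasurable)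
    (Filter.Eventually.of_forall fun u hu q hq => by
      apply hC (q, u)
      constructor
      · exact Metric.mem_closedBall.mpr (le_of_lt (Metric.mem_ball.mp hq))
      · rw [Set.uIoc_of_le (zero_le_one' ℝ)] at hu
        exact ⟨le_of_lt hu.1, hu.2⟩)
    intervalIntegrable_const
    (Filter.Eventually.of_forall fun u _ q _ => claimB hf₁ hA hsymm q u)
  rwa [claimC hf₁ hA p] at key

end Potential




/-- **Constraints for a well-defined nonrelativistic limit (Poincaré lemma form).**
For smooth `f₀, f₁ : ℝ × ℝ³ → ℝ` and `A : ℝ × ℝ³ → ℝ³`, the constraints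
`∂_β f₀ = 0` and `∂_β f₁ − ∂_t A_β + v^α(∂_β A_α − ∂_α A_β) = 0` (for all `t,x,v,β`)
hold iff `f₀` depends only on `t` and there is a smooth potential `Ψ(t,x)` with
`A_α = ∂_α Ψ` and `f₁ = ∂_t Ψ`. -/
theorem nonrelativistic_limit_constraints
    (f₀ f₁ : ℝ → (Fin 3 → ℝ) → ℝ) (A : ℝ → (Fin 3 → ℝ) → Fin 3 → ℝ)
    (hf₀ : ContDiff ℝ (⊤ : ℕ∞) (fun p : ℝ × (Fin 3 → ℝ) => f₀ p.1 p.2))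
    (hf₁ : ContDiff ℝ (⊤ : ℕ∞) (fun p : ℝ × (Fin 3 → ℝ) => f₁ p.1 p.2))
    (hA : ContDiff ℝ (⊤ : ℕ∞) (fun p : ℝ × (Fin 3 → ℝ) => A p.1 p.2)) :
    (∀ (t : ℝ) (x v : Fin 3 → ℝ) (β : Fin 3),
        fderiv ℝ (f₀ t) x (Pi.single β 1) = 0 ∧
        fderiv ℝ (f₁ t) x (Pi.single β 1) - deriv (fun s => A s x β) t
          + ∑ α : Fin 3, v α *
              (fderiv ℝ (fun y => A t y α) x (Pi.single β 1)
                - fderiv ℝ (fun y => A t y β) x (Pi.single α 1)) = 0)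
      ↔ ((∀ (t : ℝ) (x₁ x₂ : Fin 3 → ℝ), f₀ t x₁ = f₀ t x₂) ∧
          ∃ Ψ : ℝ → (Fin 3 → ℝ) → ℝ,
            ContDiff ℝ (⊤ : ℕ∞) (fun p : ℝ × (Fin 3 → ℝ) => Ψ p.1 p.2) ∧
            (∀ (t : ℝ) (x : Fin 3 → ℝ) (α : Fin 3),
              A t x α = fderiv ℝ (Ψ t) x (Pi.single α 1)) ∧
            (∀ (t : ℝ) (x : Fin 3 → ℝ), f₁ t x = deriv (fun s => Ψ s x) t)) := by
  constructor
  · intro h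
    have hF1d : Differentiable ℝ (fun p : ℝ × (Fin 3 → ℝ) => f₁ p.1 p.2) :=
      hf₁.differentiable (by simp)
    have hAd : ∀ α : Fin 3, Differentiable ℝ (fun p : ℝ × (Fin 3 → ℝ) => A p.1 p.2 α) :=
      fun α => (contDiff_pi.mp hA α).differentiable (by simp)
    have hf₀const : ∀ (t : ℝ) (x₁ x₂ : Fin 3 → ℝ), f₀ t x₁ = f₀ t x₂ := by
      intro t x₁ x₂
      have hdiff : Differentiable ℝ (f₀ t) := fun x =>
        (sliceX_hasFDerivAt (fun p : ℝ × (Fin 3 → ℝ) => f₀ p.1 p.2)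
          (hf₀.differentiable (by simp)) t x).differentiableAt
      refine is_const_of_fderiv_eq_zero hdiff (fun x => ?_) x₁ x₂
      apply ContinuousLinearMap.ext
      intro w
      rw [clm_decompV (fderiv ℝ (f₀ t) x) w]
      have hz : ∀ γ : Fin 3, fderiv ℝ (f₀ t) x (Pi.single γ 1) = 0 := fun γ => (h t x 0 γ).1
      simp [hz]
    refine ⟨hf₀const, ?_⟩
    have E1 : ∀ (t : ℝ) (x : Fin 3 → ℝ) (β : Fin 3),
        fderiv ℝ (f₁ t) x (Pi.single β 1) = deriv (fun s => A s x β) t := by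
      intro t x β
      have h2 := (h t x 0 β).2
      simp only [Pi.zero_apply, zero_mul, Finset.sum_const_zero, add_zero] at h2
      linarith
    have E2 : ∀ (t : ℝ) (x : Fin 3 → ℝ) (α β : Fin 3),
        fderiv ℝ (fun y => A t y α) x (Pi.single β 1)
          = fderiv ℝ (fun y => A t y β) x (Pi.single α 1) := by
      intro t x α β
      have h2 := (h t x (Pi.single α 1) β).2
      rw [E1 t x β] at h2
      have hsum : ∑ γ : Fin 3, (Pi.single α 1 : Fin 3 → ℝ) γ *
          (fderiv ℝ (fun y => A t y γ) x (Pi.single β 1)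
            - fderiv ℝ (fun y => A t y β) x (Pi.single γ 1)) = 0 := by linarith
      simp only [Pi.single_apply, ite_mul, one_mul, zero_mul,
        Finset.sum_ite_eq', Finset.mem_univ, if_true] at hsum
      linarith
    have S1 : ∀ (p : ℝ × (Fin 3 → ℝ)) (β : Fin 3),
        fderiv ℝ (fun q : ℝ × (Fin 3 → ℝ) => f₁ q.1 q.2) p ((0:ℝ), Pi.single β 1)
          = fderiv ℝ (fun q : ℝ × (Fin 3 → ℝ) => A q.1 q.2 β) p (1, 0) := by
      intro p β
      have hx : HasFDerivAt (f₁ p.1)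
          ((fderiv ℝ (fun q : ℝ × (Fin 3 → ℝ) => f₁ q.1 q.2) p).comp
            (ContinuousLinearMap.inr ℝ ℝ (Fin 3 → ℝ))) p.2 :=
        sliceX_hasFDerivAt (fun q : ℝ × (Fin 3 → ℝ) => f₁ q.1 q.2) hF1d p.1 p.2
      have ht : HasDerivAt (fun s => A s p.2 β)
          (fderiv ℝ (fun q : ℝ × (Fin 3 → ℝ) => A q.1 q.2 β) p (1, 0)) p.1 :=
        sliceT_hasDerivAt (fun q : ℝ × (Fin 3 → ℝ) => A q.1 q.2 β) (hAd β) p.1 p.2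
      have h3 := E1 p.1 p.2 β
      rw [hx.fderiv] at h3
      rw [ht.deriv] at h3
      simpa using h3
    have S2 : ∀ (p : ℝ × (Fin 3 → ℝ)) (α β : Fin 3),
        fderiv ℝ (fun q : ℝ × (Fin 3 → ℝ) => A q.1 q.2 α) p ((0:ℝ), Pi.single β 1)
          = fderiv ℝ (fun q : ℝ × (Fin 3 → ℝ) => A q.1 q.2 β) p ((0:ℝ), Pi.single α 1) := by
      intro p α β
      have hxα : HasFDerivAt (fun y => A p.1 y α)
          ((fderiv ℝ (fun q : ℝ × (Fin 3 → ℝ) => A q.1 q.2 α) p).comp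
            (ContinuousLinearMap.inr ℝ ℝ (Fin 3 → ℝ))) p.2 :=
        sliceX_hasFDerivAt (fun q : ℝ × (Fin 3 → ℝ) => A q.1 q.2 α) (hAd α) p.1 p.2
      have hxβ : HasFDerivAt (fun y => A p.1 y β)
          ((fderiv ℝ (fun q : ℝ × (Fin 3 → ℝ) => A q.1 q.2 β) p).comp
            (ContinuousLinearMap.inr ℝ ℝ (Fin 3 → ℝ))) p.2 :=
        sliceX_hasFDerivAt (fun q : ℝ × (Fin 3 → ℝ) => A q.1 q.2 β) (hAd β) p.1 p.2
      have h3 := E2 p.1 p.2 α β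
      rw [hxα.fderiv, hxβ.fderiv] at h3
      simpa using h3
    have hsymm := Lform_fderiv_symm hf₁ hA S1 S2
    have hD := claimD hf₁ hA hsymm
    refine ⟨fun t x => ∫ u in (0:ℝ)..1, Lform f₁ A (u • ((t, x) : ℝ × (Fin 3 → ℝ))) (t, x),
      ?_, ?_, ?_⟩
    · show ContDiff ℝ (⊤ : ℕ∞) (fun q : ℝ × (Fin 3 → ℝ) => ∫ u in (0:ℝ)..1, Lform f₁ A (u • q) q)
      rw [contDiff_infty_iff_fderiv]
      refine ⟨fun p => (hD p).differentiableAt, ?_⟩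
      have hfd : fderiv ℝ (fun q : ℝ × (Fin 3 → ℝ) => ∫ u in (0:ℝ)..1, Lform f₁ A (u • q) q)
          = Lform f₁ A := funext fun p => (hD p).fderiv
      rw [hfd]
      exact Lform_contDiff hf₁ hA
    · intro t x α
      have hval : HasFDerivAt
          (fun y => ∫ u in (0:ℝ)..1, Lform f₁ A (u • ((t, y) : ℝ × (Fin 3 → ℝ))) (t, y))
          ((Lform f₁ A (t, x)).comp (ContinuousLinearMap.inr ℝ ℝ (Fin 3 → ℝ))) x :=
        (hD (t, x)).comp x (hasFDerivAt_prodMk_right t x)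
      rw [hval.fderiv]
      simp only [ContinuousLinearMap.comp_apply, ContinuousLinearMap.inr_apply]
      rw [Lform_apply]
      simp [Pi.single_apply]
    · intro t x
      have hder : HasDerivAt
          (fun s => ∫ u in (0:ℝ)..1, Lform f₁ A (u • ((s, x) : ℝ × (Fin 3 → ℝ))) (s, x))
          (Lform f₁ A (t, x) (1, 0)) t := by
        have hder' := (hD (t, x)).comp_hasDerivAt t ((hasDerivAt_id t).prodMk (hasDerivAt_const t x))
        exact hder'
      rw [hder.deriv, Lform_apply]
      simp
  · rintro ⟨hconst, Ψ, hΨ, hAeq, hf₁eq⟩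
    intro t x v β
    have hΦd := hΨ.differentiable (by simp)
    have hΦ' : ContDiff ℝ (⊤ : ℕ∞) (fderiv ℝ (fun p : ℝ × (Fin 3 → ℝ) => Ψ p.1 p.2)) :=
      hΨ.fderiv_right (m := (⊤ : ℕ∞)) (by simp)
    set Φ' := fderiv ℝ (fun p : ℝ × (Fin 3 → ℝ) => Ψ p.1 p.2) with hΦ'def
    set f'' := fderiv ℝ Φ' (t, x) with hf''def
    have hsymm := second_derivative_symmetric (f' := Φ')
      (fun y => (hΦd y).hasFDerivAt) ((hΦ'.differentiable (by simp) (t, x)).hasFDerivAt)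
    constructor
    · have hcf : f₀ t = fun _ => f₀ t x := funext fun y => hconst t y x
      rw [hcf, fderiv_fun_const]
      simp
    · -- rewrite A and f₁ in terms of Φ'
      have hf₁fun : f₁ t = fun y => Φ' (t, y) (1, 0) := by
        funext y
        rw [hf₁eq t y]
        exact (sliceT_hasDerivAt (fun p : ℝ × (Fin 3 → ℝ) => Ψ p.1 p.2) hΦd t y).deriv
      have hAfun : ∀ (s : ℝ) (y : Fin 3 → ℝ) (γ : Fin 3),
          A s y γ = Φ' (s, y) ((0:ℝ), Pi.single γ 1) := by
        intro s y γ
        rw [hAeq s y γ]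
        have hx : HasFDerivAt (Ψ s)
            ((Φ' (s, y)).comp (ContinuousLinearMap.inr ℝ ℝ (Fin 3 → ℝ))) y :=
          sliceX_hasFDerivAt (fun p : ℝ × (Fin 3 → ℝ) => Ψ p.1 p.2) hΦd s y
        rw [hx.fderiv]
        simp
      have e1 : fderiv ℝ (f₁ t) x (Pi.single β 1)
          = f'' ((0:ℝ), (Pi.single β 1 : Fin 3 → ℝ)) (1, 0) := by
        rw [hf₁fun]
        have hc : HasFDerivAt (fun y => Φ' (t, y))
            (f''.comp (ContinuousLinearMap.inr ℝ ℝ (Fin 3 → ℝ))) x :=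
          sliceX_hasFDerivAt Φ' (hΦ'.differentiable (by simp)) t x
        have hc2 := hc.clm_apply (hasFDerivAt_const ((1:ℝ), (0 : Fin 3 → ℝ)) x)
        rw [hc2.fderiv]
        simp
      have e2 : deriv (fun s => A s x β) t = f'' (1, 0) ((0:ℝ), Pi.single β 1) := by
        have hAfun2 : (fun s => A s x β) = fun s => Φ' (s, x) ((0:ℝ), Pi.single β 1) := by
          funext s
          exact hAfun s x β
        rw [hAfun2]
        have hd2 : HasDerivAt (fun s => Φ' (s, x)) (f'' (1, 0)) t :=
          sliceT_hasDerivAt Φ' (hΦ'.differentiable (by simp)) t x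
        have hd3 : HasDerivAt (fun s => Φ' (s, x) ((0:ℝ), Pi.single β 1))
            (f'' (1, 0) ((0:ℝ), Pi.single β 1)) t :=
          (ContinuousLinearMap.apply ℝ ℝ
            (((0:ℝ), Pi.single β 1) : ℝ × (Fin 3 → ℝ))).hasFDerivAt.comp_hasDerivAt t hd2
        exact hd3.deriv
      have e3 : ∀ α : Fin 3, fderiv ℝ (fun y => A t y α) x (Pi.single β 1)
          = f'' ((0:ℝ), Pi.single β 1) ((0:ℝ), Pi.single α 1) := by
        intro α
        have hAfun3 : (fun y => A t y α) = fun y => Φ' (t, y) ((0:ℝ), Pi.single α 1) := by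
          funext y
          exact hAfun t y α
        rw [hAfun3]
        have hc : HasFDerivAt (fun y => Φ' (t, y))
            (f''.comp (ContinuousLinearMap.inr ℝ ℝ (Fin 3 → ℝ))) x :=
          sliceX_hasFDerivAt Φ' (hΦ'.differentiable (by simp)) t x
        have hc2 := hc.clm_apply (hasFDerivAt_const ((0:ℝ), (Pi.single α 1 : Fin 3 → ℝ)) x)
        rw [hc2.fderiv]
        simp
      rw [e1, e2]
      have hz : ∀ α : Fin 3, fderiv ℝ (fun y => A t y α) x (Pi.single β 1)
          - fderiv ℝ (fun y => A t y β) x (Pi.single α 1) = 0 := by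
        intro α
        rw [e3 α]
        have hAfun4 : (fun y => A t y β) = fun y => Φ' (t, y) ((0:ℝ), Pi.single β 1) := by
          funext y
          exact hAfun t y β
        rw [hAfun4]
        have hc : HasFDerivAt (fun y => Φ' (t, y))
            (f''.comp (ContinuousLinearMap.inr ℝ ℝ (Fin 3 → ℝ))) x :=
          sliceX_hasFDerivAt Φ' (hΦ'.differentiable (by simp)) t x
        have hc2 := hc.clm_apply (hasFDerivAt_const ((0:ℝ), (Pi.single β 1 : Fin 3 → ℝ)) x)
        rw [hc2.fderiv]
        simp only [ContinuousLinearMap.add_apply, ContinuousLinearMap.comp_apply,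
          ContinuousLinearMap.inr_apply, ContinuousLinearMap.flip_apply,
          ContinuousLinearMap.comp_zero, ContinuousLinearMap.zero_apply, zero_add]
        rw [hsymm ((0:ℝ), Pi.single β 1) ((0:ℝ), Pi.single α 1)]
        ring
      rw [hsymm (((0:ℝ), Pi.single β 1) : ℝ × (Fin 3 → ℝ)) (1, 0)]
      simp [hz, hf''def]
end

section
/- Let N ≥ 1, let M₁, …, M_N > 0 be real numbers, Ξ, φ ∈ ℝ, and v, Z ∈ ℝ³. Set M = Σ_{n=1}^N M_n and Ξ_eff = Ξ·(Σ_{n=1}^N M_n²)/M. Then Σ_{n=1}^N [ (1 − ΞM_n)·(M_n/2)·|v|² − (1 − 2ΞM_n)·M_n·φ − (ΞM_n²/2)·( |Z|² + 2⟨v,Z⟩ ) ] = (1 − Ξ_eff)·(M/2)·|v|² − (1 − 2Ξ_eff)·M·φ − (M/2)·Ξ_eff·( |Z|² + 2⟨v,Z⟩ ). Moreover, if all constituent masses are equal, M_n = m for all n, then Ξ_eff = Ξ·m = Ξ·M/N, i.e. the deformation parameter of the composite body is suppressed by the factor 1/N relative to ΞM. -/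
/-!
Write the single-particle Lagrangian in terms of the mass `m` and the dimensionless deformation
`ε = Ξ m`. It is then linear in the pair `(m, ε m)`, so a sum of such Lagrangians has the same
form with total mass `M = Σ mₙ` and `ε M = Σ εₙ mₙ = Ξ Σ mₙ²`, i.e. `ε` is the mass-weighted
mean of the `εₙ`. For `N` equal masses this mean is `Ξ m = Ξ M / N`.
-/

open Finset

/-- The κ-Poincaré Lagrangian of a body of mass `m` and deformation `ε = Ξ m`, moving with
`v² = v2` in the potential `φ`, with `Z² = z2` and `v · Z = vz`. -/
noncomputable def kappaLagrangian (m ε φ v2 z2 vz : ℝ) : ℝ :=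
  (1 - ε) * (m / 2) * v2 - (1 - 2 * ε) * m * φ - (m / 2) * ε * (z2 + 2 * vz)

theorem kappaLagrangian_eq_add (m ε φ v2 z2 vz : ℝ) :
    kappaLagrangian m ε φ v2 z2 vz
      = m * (v2 / 2 - φ) + ε * m * (2 * φ - v2 / 2 - (z2 + 2 * vz) / 2) := by
  unfold kappaLagrangian
  ring

theorem sum_kappaLagrangian {ι : Type*} (s : Finset ι) (m ε : ι → ℝ) (φ v2 z2 vz : ℝ)
    (hm : ∑ i ∈ s, m i ≠ 0) :
    ∑ i ∈ s, kappaLagrangian (m i) (ε i) φ v2 z2 vz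
      = kappaLagrangian (∑ i ∈ s, m i) ((∑ i ∈ s, ε i * m i) / ∑ i ∈ s, m i) φ v2 z2 vz := by
  simp only [kappaLagrangian_eq_add, sum_add_distrib, ← sum_mul, div_mul_cancel₀ _ hm]

theorem sum_sq_div_sum_of_const {ι : Type*} (s : Finset ι) (hs : s.Nonempty) (m : ℝ) :
    (∑ _i ∈ s, m ^ 2) / ∑ _i ∈ s, m = m := by
  have hcard : (#s : ℝ) ≠ 0 := Nat.cast_ne_zero.2 hs.card_pos.ne'
  rcases eq_or_ne m 0 with rfl | hm
  · simp
  · simp only [sum_const, nsmul_eq_mul]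
    field_simp

/-- **Composite-body Lagrangian and 1/N depletion of the deformation parameter.**
For `N` rigidly co-moving particles of masses `Mₙ > 0` with single-particle κ-Poincaré
Lagrangians, the summed Lagrangian has the single-particle form with total mass
`M = ΣMₙ` and effective coupling `Ξ_eff = Ξ·(ΣMₙ²)/M`; for equal constituent masses
`Mₙ = m` one has `Ξ_eff = Ξ·m = Ξ·M/N`. -/
theorem composite_body_lagrangian (N : ℕ) (hN : 1 ≤ N) (M : Fin N → ℝ)
    (hM : ∀ n : Fin N, 0 < M n) (Ξ φ : ℝ) (v Z : Fin 3 → ℝ) :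
    ((∑ n : Fin N, ((1 - Ξ * M n) * (M n / 2) * (∑ i : Fin 3, v i * v i)
        - (1 - 2 * Ξ * M n) * M n * φ
        - (Ξ * (M n) ^ 2 / 2) * ((∑ i : Fin 3, Z i * Z i) + 2 * ∑ i : Fin 3, v i * Z i)))
      = (1 - Ξ * (∑ n : Fin N, (M n) ^ 2) / (∑ n : Fin N, M n))
            * ((∑ n : Fin N, M n) / 2) * (∑ i : Fin 3, v i * v i)
        - (1 - 2 * (Ξ * (∑ n : Fin N, (M n) ^ 2) / (∑ n : Fin N, M n)))
            * (∑ n : Fin N, M n) * φ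
        - ((∑ n : Fin N, M n) / 2) * (Ξ * (∑ n : Fin N, (M n) ^ 2) / (∑ n : Fin N, M n))
            * ((∑ i : Fin 3, Z i * Z i) + 2 * ∑ i : Fin 3, v i * Z i))
    ∧ ∀ m : ℝ, (∀ n : Fin N, M n = m) →
        (Ξ * (∑ n : Fin N, (M n) ^ 2) / (∑ n : Fin N, M n) = Ξ * m
          ∧ Ξ * (∑ n : Fin N, (M n) ^ 2) / (∑ n : Fin N, M n)
              = Ξ * (∑ n : Fin N, M n) / N) := by
  have hne : (univ : Finset (Fin N)).Nonempty := univ_nonempty_iff.2 (Fin.pos_iff_nonempty.1 hN)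
  have hS : ∑ n : Fin N, M n ≠ 0 := (sum_pos (fun n _ => hM n) hne).ne'
  have hΞ : ∑ n : Fin N, Ξ * M n * M n = Ξ * ∑ n : Fin N, M n ^ 2 := by
    simp only [mul_sum, sq, mul_assoc]
  refine ⟨?_, fun m hm => ?_⟩
  · have hsum := sum_kappaLagrangian univ M (fun n => Ξ * M n) φ
      (∑ i : Fin 3, v i * v i) (∑ i : Fin 3, Z i * Z i) (∑ i : Fin 3, v i * Z i) hS
    unfold kappaLagrangian at hsum
    rw [← hΞ, ← hsum]
    exact sum_congr rfl fun n _ => by ring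
  · obtain rfl : M = fun _ => m := funext hm
    have hmean : Ξ * (∑ _n : Fin N, m ^ 2) / ∑ _n : Fin N, m = Ξ * m := by
      rw [mul_div_assoc, sum_sq_div_sum_of_const univ hne]
    refine ⟨hmean, ?_⟩
    rw [hmean, sum_const, card_univ, Fintype.card_fin, nsmul_eq_mul]
    field_simp [(Nat.cast_pos.2 hN).ne']
end
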